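/- With P the variance-swap price of Theorem 2.1, the hedge coefficients of Theorem 2.2 evaluate in closed form: (λ(1−θ)/S) ∫_{(0,∞)} ( P(t, σ² + x, V) − P(t, σ², V) ) (e^{ρ(1−θ)x} − 1) ν(dx) = ((1−θ)/S) e^{-r(T−t)} (1−e^{-λ(T−t)}) ∫_{(0,∞)} x (e^{ρ(1−θ)x} − 1) ν(dx), and (λθ/S) ∫_{(0,∞)} ( P(t, σ² + x, V) − P(t, σ², V) ) (e^{ρθx} − 1) νᵇ(dx) = (θ/S) e^{-r(T−t)} (1−e^{-λ(T−t)}) ∫_{(0,∞)} x (e^{ρθx} − 1) νᵇ(dx), provided that x ↦ x(e^{ρ(1−θ)x} − 1) is ν-integrable and x ↦ x(e^{ρθx} − 1) is νᵇ-integrable and S ≠ 0, λ > 0. -/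

import Mathlib

open Real MeasureTheory

section JumpIntegrals

variable {μ : Measure ℝ} {s : Set ℝ} {F w : ℝ → ℝ} {σ : ℝ}

theorem setIntegral_increment_mul_of_linear {c : ℝ} (hF : ∀ x, F (σ + x) - F σ = c * x) :
    ∫ x in s, (F (σ + x) - F σ) * w x ∂μ = c * ∫ x in s, x * w x ∂μ := by
  simp_rw [hF, mul_assoc]
  exact integral_const_mul c _

theorem mul_setIntegral_increment_mul_of_slope_div {lam a S D₁ D₂ : ℝ} (hlam : lam ≠ 0)
    (hF : ∀ x, F (σ + x) - F σ = D₁ * D₂ / lam * x) :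
    lam * a / S * ∫ x in s, (F (σ + x) - F σ) * w x ∂μ
      = a / S * D₁ * D₂ * ∫ x in s, x * w x ∂μ := by
  rw [setIntegral_increment_mul_of_linear hF]
  field_simp

end JumpIntegrals

theorem hedgeCoefficients_closedForm_general
    (lam r ρ θ κ₁ κ₁b κ₂ κ₂b T K : ℝ) (hlam : 0 < lam)
    (P : ℝ → ℝ → ℝ → ℝ)
    (hP : ∀ t σsq V : ℝ, t ≤ T → P t σsq V = Real.exp (-r * (T - t)) *
      (V + (T - t) * (κ₁ * (1 - θ) + κ₁b * θ)
        + (1 / lam) * (1 - Real.exp (-lam * (T - t))) *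
            (σsq - κ₁ * (1 - θ) - κ₁b * θ)
        + ρ ^ 2 * (1 - θ) ^ 2 * lam * κ₂ + ρ ^ 2 * θ ^ 2 * lam * κ₂b - K))
    (ν νb : Measure ℝ) (S : ℝ)
    (t σsq V : ℝ) (htT : t ≤ T) :
    ((lam * (1 - θ) / S) *
        ∫ x in Set.Ioi (0 : ℝ),
          (P t (σsq + x) V - P t σsq V) * (Real.exp (ρ * (1 - θ) * x) - 1) ∂ν
      = ((1 - θ) / S) * Real.exp (-r * (T - t)) * (1 - Real.exp (-lam * (T - t))) *
          ∫ x in Set.Ioi (0 : ℝ), x * (Real.exp (ρ * (1 - θ) * x) - 1) ∂ν)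
    ∧
    ((lam * θ / S) *
        ∫ x in Set.Ioi (0 : ℝ),
          (P t (σsq + x) V - P t σsq V) * (Real.exp (ρ * θ * x) - 1) ∂νb
      = (θ / S) * Real.exp (-r * (T - t)) * (1 - Real.exp (-lam * (T - t))) *
          ∫ x in Set.Ioi (0 : ℝ), x * (Real.exp (ρ * θ * x) - 1) ∂νb) := by
  have price_slope : ∀ x, P t (σsq + x) V - P t σsq V
      = exp (-r * (T - t)) * (1 - exp (-lam * (T - t))) / lam * x := by
    intro x
    rw [hP _ _ _ htT, hP _ _ _ htT]
    ring
  exact ⟨mul_setIntegral_increment_mul_of_slope_div (F := (P t · V)) hlam.ne' price_slope,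
    mul_setIntegral_increment_mul_of_slope_div (F := (P t · V)) hlam.ne' price_slope⟩

/-- Closed-form evaluation of the hedge coefficients A and B of Theorem 2.2
when the variance-swap price is the explicit one of Theorem 2.1
(the computation underlying Corollary 2.3). -/
theorem hedgeCoefficients_closedForm
    (lam r ρ θ κ₁ κ₁b κ₂ κ₂b T K : ℝ) (hlam : 0 < lam)
    (P : ℝ → ℝ → ℝ → ℝ)
    (hP : ∀ t σsq V : ℝ, t ≤ T → P t σsq V = Real.exp (-r * (T - t)) *
      (V + (T - t) * (κ₁ * (1 - θ) + κ₁b * θ)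
        + (1 / lam) * (1 - Real.exp (-lam * (T - t))) *
            (σsq - κ₁ * (1 - θ) - κ₁b * θ)
        + ρ ^ 2 * (1 - θ) ^ 2 * lam * κ₂ + ρ ^ 2 * θ ^ 2 * lam * κ₂b - K))
    (ν νb : Measure ℝ) (S : ℝ) (hS : S ≠ 0)
    (hν : IntegrableOn (fun x => x * (Real.exp (ρ * (1 - θ) * x) - 1)) (Set.Ioi 0) ν)
    (hνb : IntegrableOn (fun x => x * (Real.exp (ρ * θ * x) - 1)) (Set.Ioi 0) νb)
    (t σsq V : ℝ) (htT : t ≤ T) :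
    ((lam * (1 - θ) / S) *
        ∫ x in Set.Ioi (0 : ℝ),
          (P t (σsq + x) V - P t σsq V) * (Real.exp (ρ * (1 - θ) * x) - 1) ∂ν
      = ((1 - θ) / S) * Real.exp (-r * (T - t)) * (1 - Real.exp (-lam * (T - t))) *
          ∫ x in Set.Ioi (0 : ℝ), x * (Real.exp (ρ * (1 - θ) * x) - 1) ∂ν)
    ∧
    ((lam * θ / S) *
        ∫ x in Set.Ioi (0 : ℝ),
          (P t (σsq + x) V - P t σsq V) * (Real.exp (ρ * θ * x) - 1) ∂νb
      = (θ / S) * Real.exp (-r * (T - t)) * (1 - Real.exp (-lam * (T - t))) *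
          ∫ x in Set.Ioi (0 : ℝ), x * (Real.exp (ρ * θ * x) - 1) ∂νb) :=
  hedgeCoefficients_closedForm_general lam r ρ θ κ₁ κ₁b κ₂ κ₂b T K hlam P hP ν νb S t σsq V htT
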